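/- arXiv:hep-th/9307020 — 2 statements merged into one kernel-verified Lean document; each statement's English description precedes it below -/
import Mathlib

section
/- If z is a function of t₁ and t₃ with ∂₁z nonvanishing that satisfies the Ur–KdV equation 4∂₃z = S(z)·∂₁z, where S(z) = ∂₁³z/∂₁z − (3/2)(∂₁²z/∂₁z)², then u := (1/2)S(z) satisfies the KdV equation 4∂₃u = ∂₁³u + 6u∂₁u. -/
noncomputable section

/-- Partial derivative in the first variable. -/
def d1 (f : ℝ → ℝ → ℝ) : ℝ → ℝ → ℝ := fun x y => deriv (fun s => f s y) x

/-- Partial derivative in the second variable (the time `t₃`). -/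
def d3 (f : ℝ → ℝ → ℝ) : ℝ → ℝ → ℝ := fun x y => deriv (fun s => f x s) y

/-- Schwarzian derivative of `z` with respect to the first variable. -/
def schwarzian (z : ℝ → ℝ → ℝ) : ℝ → ℝ → ℝ := fun x y =>
  d1 (d1 (d1 z)) x y / d1 z x y - (3 / 2) * (d1 (d1 z) x y / d1 z x y) ^ 2


lemma slice1' {G : ℝ × ℝ → ℝ} (hG : Differentiable ℝ G) (x y : ℝ) :
    HasDerivAt (fun s => G (s, y)) (fderiv ℝ G (x, y) (1, 0)) x :=
  (hG (x, y)).hasFDerivAt.comp_hasDerivAt x (HasDerivAt.prodMk (hasDerivAt_id x) (hasDerivAt_const x y))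

lemma slice3' {G : ℝ × ℝ → ℝ} (hG : Differentiable ℝ G) (x y : ℝ) :
    HasDerivAt (fun t => G (x, t)) (fderiv ℝ G (x, y) (0, 1)) y :=
  (hG (x, y)).hasFDerivAt.comp_hasDerivAt y (HasDerivAt.prodMk (hasDerivAt_const y x) (hasDerivAt_id y))

lemma hasDerivAt_d1 {f : ℝ → ℝ → ℝ} (hf : ContDiff ℝ (⊤ : ℕ∞) (fun p : ℝ × ℝ => f p.1 p.2))
    (x y : ℝ) : HasDerivAt (fun s => f s y) (d1 f x y) x := by
  have h := slice1' (hf.differentiable (by simp)) x y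
  have : d1 f x y = fderiv ℝ (fun p : ℝ × ℝ => f p.1 p.2) (x, y) (1, 0) := h.deriv
  rw [this]; exact h

lemma hasDerivAt_d3 {f : ℝ → ℝ → ℝ} (hf : ContDiff ℝ (⊤ : ℕ∞) (fun p : ℝ × ℝ => f p.1 p.2))
    (x y : ℝ) : HasDerivAt (fun t => f x t) (d3 f x y) y := by
  have h := slice3' (hf.differentiable (by simp)) x y
  have : d3 f x y = fderiv ℝ (fun p : ℝ × ℝ => f p.1 p.2) (x, y) (0, 1) := h.deriv
  rw [this]; exact h

lemma contDiff_d1 {f : ℝ → ℝ → ℝ} (hf : ContDiff ℝ (⊤ : ℕ∞) (fun p : ℝ × ℝ => f p.1 p.2)) :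
    ContDiff ℝ (⊤ : ℕ∞) (fun p : ℝ × ℝ => d1 f p.1 p.2) := by
  have h2 := (contDiff_infty_iff_fderiv.mp hf).2
  have he : (fun p : ℝ × ℝ => d1 f p.1 p.2) =
      fun p : ℝ × ℝ => fderiv ℝ (fun q : ℝ × ℝ => f q.1 q.2) p ((1 : ℝ), (0 : ℝ)) := by
    funext p
    have := (slice1' (hf.differentiable (by simp)) p.1 p.2).deriv
    simpa [d1] using this
  rw [he]; exact h2.clm_apply contDiff_const

lemma contDiff_d3 {f : ℝ → ℝ → ℝ} (hf : ContDiff ℝ (⊤ : ℕ∞) (fun p : ℝ × ℝ => f p.1 p.2)) :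
    ContDiff ℝ (⊤ : ℕ∞) (fun p : ℝ × ℝ => d3 f p.1 p.2) := by
  have h2 := (contDiff_infty_iff_fderiv.mp hf).2
  have he : (fun p : ℝ × ℝ => d3 f p.1 p.2) =
      fun p : ℝ × ℝ => fderiv ℝ (fun q : ℝ × ℝ => f q.1 q.2) p ((0 : ℝ), (1 : ℝ)) := by
    funext p
    have := (slice3' (hf.differentiable (by simp)) p.1 p.2).deriv
    simpa [d3] using this
  rw [he]; exact h2.clm_apply contDiff_const

lemma clairaut {f : ℝ → ℝ → ℝ} (hf : ContDiff ℝ (⊤ : ℕ∞) (fun p : ℝ × ℝ => f p.1 p.2))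
    (x y : ℝ) : d1 (d3 f) x y = d3 (d1 f) x y := by
  set F : ℝ × ℝ → ℝ := fun p => f p.1 p.2 with hF
  have hdF : Differentiable ℝ F := hf.differentiable (by simp)
  have h2 := (contDiff_infty_iff_fderiv.mp hf).2
  have hdF' : Differentiable ℝ (fderiv ℝ F) := h2.differentiable (by simp)
  have hsymm := second_derivative_symmetric (f := F) (f' := fderiv ℝ F)
    (f'' := fderiv ℝ (fderiv ℝ F) (x, y)) (fun p => (hdF p).hasFDerivAt)
    (hdF' (x, y)).hasFDerivAt
  -- d1 (d3 f) x y
  have e3 : ∀ a b : ℝ, d3 f a b = fderiv ℝ F (a, b) (0, 1) := fun a b =>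
    (slice3' hdF a b).deriv
  have e1 : ∀ a b : ℝ, d1 f a b = fderiv ℝ F (a, b) (1, 0) := fun a b =>
    (slice1' hdF a b).deriv
  have hg1 : Differentiable ℝ (fun p : ℝ × ℝ => fderiv ℝ F p ((0 : ℝ), (1 : ℝ))) :=
    (h2.clm_apply contDiff_const).differentiable (by simp)
  have hg2 : Differentiable ℝ (fun p : ℝ × ℝ => fderiv ℝ F p ((1 : ℝ), (0 : ℝ))) :=
    (h2.clm_apply contDiff_const).differentiable (by simp)
  have L : d1 (d3 f) x y = fderiv ℝ (fderiv ℝ F) (x, y) (1, 0) (0, 1) := by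
    have : (fun s => d3 f s y) = fun s => fderiv ℝ F (s, y) (0, 1) := funext fun s => e3 s y
    have hd : d1 (d3 f) x y = fderiv ℝ (fun p : ℝ × ℝ => fderiv ℝ F p ((0:ℝ), (1:ℝ))) (x, y) (1, 0) := by
      rw [d1, this]; exact (slice1' hg1 x y).deriv
    rw [hd, fderiv_clm_apply (hdF' (x, y)) (differentiableAt_const _)]
    simp
  have R : d3 (d1 f) x y = fderiv ℝ (fderiv ℝ F) (x, y) (0, 1) (1, 0) := by
    have : (fun t => d1 f x t) = fun t => fderiv ℝ F (x, t) (1, 0) := funext fun t => e1 x t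
    have hd : d3 (d1 f) x y = fderiv ℝ (fun p : ℝ × ℝ => fderiv ℝ F p ((1:ℝ), (0:ℝ))) (x, y) (0, 1) := by
      rw [d3, this]; exact (slice3' hg2 x y).deriv
    rw [hd, fderiv_clm_apply (hdF' (x, y)) (differentiableAt_const _)]
    simp
  rw [L, R, hsymm]

set_option maxHeartbeats 1600000 in
/-- If `z` has nonvanishing `∂₁z` and satisfies the Ur–KdV equation
`4∂₃z = S(z)·∂₁z`, then `u := (1/2)S(z)` satisfies the KdV equation
`4∂₃u = ∂₁³u + 6u∂₁u`. -/
theorem urKdV_to_KdV (z : ℝ → ℝ → ℝ)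
    (hz : ContDiff ℝ (⊤ : ℕ∞) (fun p : ℝ × ℝ => z p.1 p.2))
    (hnz : ∀ x y, d1 z x y ≠ 0)
    (hur : ∀ x y, 4 * d3 z x y = schwarzian z x y * d1 z x y) :
    ∀ x y, 4 * d3 (fun a b => (1 / 2) * schwarzian z a b) x y =
      d1 (d1 (d1 (fun a b => (1 / 2) * schwarzian z a b))) x y +
        6 * ((1 / 2) * schwarzian z x y) *
          d1 (fun a b => (1 / 2) * schwarzian z a b) x y := by
  have hz' : ContDiff ℝ (⊤ : ℕ∞) (fun p : ℝ × ℝ => z p.1 p.2) := hz.of_le (by simp)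
  set u : ℝ → ℝ → ℝ := fun a b => (1 / 2) * schwarzian z a b with hud
  set z1 := d1 z with hZ1
  set z2 := d1 z1 with hZ2
  set z3 := d1 z2 with hZ3
  set z4 := d1 z3 with hZ4
  set z5 := d1 z4 with hZ5
  set z6 := d1 z5 with hZ6
  have h1 : ContDiff ℝ (⊤ : ℕ∞) (fun p : ℝ × ℝ => z1 p.1 p.2) := by
    rw [hZ1]; exact contDiff_d1 hz'
  have h2 : ContDiff ℝ (⊤ : ℕ∞) (fun p : ℝ × ℝ => z2 p.1 p.2) := by
    rw [hZ2]; exact contDiff_d1 h1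
  have h3 : ContDiff ℝ (⊤ : ℕ∞) (fun p : ℝ × ℝ => z3 p.1 p.2) := by
    rw [hZ3]; exact contDiff_d1 h2
  have h4 : ContDiff ℝ (⊤ : ℕ∞) (fun p : ℝ × ℝ => z4 p.1 p.2) := by
    rw [hZ4]; exact contDiff_d1 h3
  have h5 : ContDiff ℝ (⊤ : ℕ∞) (fun p : ℝ × ℝ => z5 p.1 p.2) := by
    rw [hZ5]; exact contDiff_d1 h4
  have hD1 : ∀ a b, HasDerivAt (fun s => z1 s b) (z2 a b) a := by
    intro a b; rw [hZ2]; exact hasDerivAt_d1 h1 a b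
  have hD2 : ∀ a b, HasDerivAt (fun s => z2 s b) (z3 a b) a := by
    intro a b; rw [hZ3]; exact hasDerivAt_d1 h2 a b
  have hD3 : ∀ a b, HasDerivAt (fun s => z3 s b) (z4 a b) a := by
    intro a b; rw [hZ4]; exact hasDerivAt_d1 h3 a b
  have hD4 : ∀ a b, HasDerivAt (fun s => z4 s b) (z5 a b) a := by
    intro a b; rw [hZ5]; exact hasDerivAt_d1 h4 a b
  have hD5 : ∀ a b, HasDerivAt (fun s => z5 s b) (z6 a b) a := by
    intro a b; rw [hZ6]; exact hasDerivAt_d1 h5 a b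
  have hS : ∀ a b, schwarzian z a b = z3 a b / z1 a b - 3 / 2 * (z2 a b / z1 a b) ^ 2 :=
    fun a b => rfl
  have hu1 : ∀ a b, d1 u a b = (((3 : ℝ)/2) * (z2 a b ^ 3) + (-2 : ℝ) * (z1 a b ^ 1 * z2 a b ^ 1 * z3 a b ^ 1) + ((1 : ℝ)/2) * (z1 a b ^ 2 * z4 a b ^ 1)) / z1 a b ^ 3 := by
    intro a b
    have hfun : (fun s => u s b) =
        (fun s => 1 / 2 * (z3 s b / z1 s b - 3 / 2 * (z2 s b / z1 s b) ^ 2)) := by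
      funext s; simp only [hud]; rw [hS s b]
    have H : HasDerivAt
        (fun s => 1 / 2 * (z3 s b / z1 s b - 3 / 2 * (z2 s b / z1 s b) ^ 2))
        ((((3 : ℝ)/2) * (z2 a b ^ 3) + (-2 : ℝ) * (z1 a b ^ 1 * z2 a b ^ 1 * z3 a b ^ 1) + ((1 : ℝ)/2) * (z1 a b ^ 2 * z4 a b ^ 1)) / z1 a b ^ 3) a := by
      have H0 := ((((hD3 a b).div (hD1 a b) (hnz a b)).sub
        ((((hD2 a b).div (hD1 a b) (hnz a b)).pow 2).const_mul (3 / 2))).const_mul (1 / 2))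
      refine H0.congr_deriv (Eq.symm ?_)
      simp only [Pi.div_apply, Pi.pow_apply, Pi.mul_apply, Pi.add_apply, Pi.sub_apply, Nat.cast_ofNat]
      have h0 := hnz a b
      field_simp
      all_goals try ring_nf
      all_goals try field_simp
      all_goals try ring
    show deriv (fun s => u s b) a = _
    rw [hfun]
    exact H.deriv
  have hu2 : ∀ a b, d1 (d1 u) a b = (((-9 : ℝ)/2) * (z2 a b ^ 4) + ((17 : ℝ)/2) * (z1 a b ^ 1 * z2 a b ^ 2 * z3 a b ^ 1) + (-2 : ℝ) * (z1 a b ^ 2 * z3 a b ^ 2) + ((-5 : ℝ)/2) * (z1 a b ^ 2 * z2 a b ^ 1 * z4 a b ^ 1) + ((1 : ℝ)/2) * (z1 a b ^ 3 * z5 a b ^ 1)) / z1 a b ^ 4 := by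
    intro a b
    have hfun : (fun s => (d1 u) s b) = (fun s => (((3 : ℝ)/2) * (z2 s b ^ 3) + (-2 : ℝ) * (z1 s b ^ 1 * z2 s b ^ 1 * z3 s b ^ 1) + ((1 : ℝ)/2) * (z1 s b ^ 2 * z4 s b ^ 1)) / z1 s b ^ 3) := funext fun s => hu1 s b
    have H : HasDerivAt (fun s => (((3 : ℝ)/2) * (z2 s b ^ 3) + (-2 : ℝ) * (z1 s b ^ 1 * z2 s b ^ 1 * z3 s b ^ 1) + ((1 : ℝ)/2) * (z1 s b ^ 2 * z4 s b ^ 1)) / z1 s b ^ 3) ((((-9 : ℝ)/2) * (z2 a b ^ 4) + ((17 : ℝ)/2) * (z1 a b ^ 1 * z2 a b ^ 2 * z3 a b ^ 1) + (-2 : ℝ) * (z1 a b ^ 2 * z3 a b ^ 2) + ((-5 : ℝ)/2) * (z1 a b ^ 2 * z2 a b ^ 1 * z4 a b ^ 1) + ((1 : ℝ)/2) * (z1 a b ^ 3 * z5 a b ^ 1)) / z1 a b ^ 4) a := by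
      have H0 := (((((hD2 a b).pow 3).const_mul ((3 : ℝ)/2)).add (((((hD1 a b).pow 1).mul ((hD2 a b).pow 1)).mul ((hD3 a b).pow 1)).const_mul (-2 : ℝ))).add ((((hD1 a b).pow 2).mul ((hD4 a b).pow 1)).const_mul ((1 : ℝ)/2))).div ((hD1 a b).pow 3) (pow_ne_zero 3 (hnz a b))
      refine H0.congr_deriv (Eq.symm ?_)
      simp only [Pi.div_apply, Pi.pow_apply, Pi.mul_apply, Pi.add_apply, Pi.sub_apply, Nat.cast_ofNat]
      have h0 := hnz a b
      field_simp
      all_goals try ring_nf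
      all_goals try field_simp
      all_goals try ring
    show deriv (fun s => (d1 u) s b) a = _
    rw [hfun]
    exact H.deriv
  have hu3 : ∀ a b, d1 (d1 (d1 u)) a b = ((18 : ℝ) * (z2 a b ^ 5) + ((-87 : ℝ)/2) * (z1 a b ^ 1 * z2 a b ^ 3 * z3 a b ^ 1) + (21 : ℝ) * (z1 a b ^ 2 * z2 a b ^ 1 * z3 a b ^ 2) + ((27 : ℝ)/2) * (z1 a b ^ 2 * z2 a b ^ 2 * z4 a b ^ 1) + ((-13 : ℝ)/2) * (z1 a b ^ 3 * z3 a b ^ 1 * z4 a b ^ 1) + (-3 : ℝ) * (z1 a b ^ 3 * z2 a b ^ 1 * z5 a b ^ 1) + ((1 : ℝ)/2) * (z1 a b ^ 4 * z6 a b ^ 1)) / z1 a b ^ 5 := by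
    intro a b
    have hfun : (fun s => (d1 (d1 u)) s b) = (fun s => (((-9 : ℝ)/2) * (z2 s b ^ 4) + ((17 : ℝ)/2) * (z1 s b ^ 1 * z2 s b ^ 2 * z3 s b ^ 1) + (-2 : ℝ) * (z1 s b ^ 2 * z3 s b ^ 2) + ((-5 : ℝ)/2) * (z1 s b ^ 2 * z2 s b ^ 1 * z4 s b ^ 1) + ((1 : ℝ)/2) * (z1 s b ^ 3 * z5 s b ^ 1)) / z1 s b ^ 4) := funext fun s => hu2 s b
    have H : HasDerivAt (fun s => (((-9 : ℝ)/2) * (z2 s b ^ 4) + ((17 : ℝ)/2) * (z1 s b ^ 1 * z2 s b ^ 2 * z3 s b ^ 1) + (-2 : ℝ) * (z1 s b ^ 2 * z3 s b ^ 2) + ((-5 : ℝ)/2) * (z1 s b ^ 2 * z2 s b ^ 1 * z4 s b ^ 1) + ((1 : ℝ)/2) * (z1 s b ^ 3 * z5 s b ^ 1)) / z1 s b ^ 4) (((18 : ℝ) * (z2 a b ^ 5) + ((-87 : ℝ)/2) * (z1 a b ^ 1 * z2 a b ^ 3 * z3 a b ^ 1) + (21 : ℝ) * (z1 a b ^ 2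 * z2 a b ^ 1 * z3 a b ^ 2) + ((27 : ℝ)/2) * (z1 a b ^ 2 * z2 a b ^ 2 * z4 a b ^ 1) + ((-13 : ℝ)/2) * (z1 a b ^ 3 * z3 a b ^ 1 * z4 a b ^ 1) + (-3 : ℝ) * (z1 a b ^ 3 * z2 a b ^ 1 * z5 a b ^ 1) + ((1 : ℝ)/2) * (z1 a b ^ 4 * z6 a b ^ 1)) / z1 a b ^ 5) a := by
      have H0 := (((((((hD2 a b).pow 4).const_mul ((-9 : ℝ)/2)).add (((((hD1 a b).pow 1).mul ((hD2 a b).pow 2)).mul ((hD3 a b).pow 1)).const_mul ((17 : ℝ)/2))).add ((((hD1 a b).pow 2).mul ((hD3 a b).pow 2)).const_mul (-2 : ℝ))).add (((((hD1 a b).pow 2).mul ((hD2 a b).pow 1)).mul ((hD4 a b).pow 1)).const_mul ((-5 : ℝ)/2))).add ((((hD1 a b).pow 3).mul ((hD5 a b).pow 1)).const_mul ((1 : ℝ)/2))).div ((hD1 a b).pow 4) (pow_ne_zero 4 (hnz a b))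
      refine H0.congr_deriv (Eq.symm ?_)
      simp only [Pi.div_apply, Pi.pow_apply, Pi.mul_apply, Pi.add_apply, Pi.sub_apply, Nat.cast_ofNat]
      have h0 := hnz a b
      field_simp
      all_goals try ring_nf
      all_goals try field_simp
      all_goals try ring
    show deriv (fun s => (d1 (d1 u)) s b) a = _
    rw [hfun]
    exact H.deriv
  have hw : ∀ a b, d3 z a b = (((-3 : ℝ)/8) * (z2 a b ^ 2) + ((1 : ℝ)/4) * (z1 a b ^ 1 * z3 a b ^ 1)) / z1 a b ^ 1 := by
    intro a b
    have h := hur a b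
    rw [hS a b] at h
    have h2 : d3 z a b = (z3 a b / z1 a b - 3 / 2 * (z2 a b / z1 a b) ^ 2) * z1 a b / 4 := by
      linarith
    rw [h2]
    field_simp [hnz a b]
    ring
  have hw1x : ∀ a b, d1 (d3 z) a b = (((3 : ℝ)/8) * (z2 a b ^ 3) + ((-3 : ℝ)/4) * (z1 a b ^ 1 * z2 a b ^ 1 * z3 a b ^ 1) + ((1 : ℝ)/4) * (z1 a b ^ 2 * z4 a b ^ 1)) / z1 a b ^ 2 := by
    intro a b
    have hfun : (fun s => (d3 z) s b) = (fun s => (((-3 : ℝ)/8) * (z2 s b ^ 2) + ((1 : ℝ)/4) * (z1 s b ^ 1 * z3 s b ^ 1)) / z1 s b ^ 1) := funext fun s => hw s b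
    have H : HasDerivAt (fun s => (((-3 : ℝ)/8) * (z2 s b ^ 2) + ((1 : ℝ)/4) * (z1 s b ^ 1 * z3 s b ^ 1)) / z1 s b ^ 1) ((((3 : ℝ)/8) * (z2 a b ^ 3) + ((-3 : ℝ)/4) * (z1 a b ^ 1 * z2 a b ^ 1 * z3 a b ^ 1) + ((1 : ℝ)/4) * (z1 a b ^ 2 * z4 a b ^ 1)) / z1 a b ^ 2) a := by
      have H0 := ((((hD2 a b).pow 2).const_mul ((-3 : ℝ)/8)).add ((((hD1 a b).pow 1).mul ((hD3 a b).pow 1)).const_mul ((1 : ℝ)/4))).div ((hD1 a b).pow 1) (pow_ne_zero 1 (hnz a b))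
      refine H0.congr_deriv (Eq.symm ?_)
      simp only [Pi.div_apply, Pi.pow_apply, Pi.mul_apply, Pi.add_apply, Pi.sub_apply, Nat.cast_ofNat]
      have h0 := hnz a b
      field_simp
      all_goals try ring_nf
      all_goals try field_simp
      all_goals try ring
    show deriv (fun s => (d3 z) s b) a = _
    rw [hfun]
    exact H.deriv
  have hw1 : ∀ a b, d3 z1 a b = (((3 : ℝ)/8) * (z2 a b ^ 3) + ((-3 : ℝ)/4) * (z1 a b ^ 1 * z2 a b ^ 1 * z3 a b ^ 1) + ((1 : ℝ)/4) * (z1 a b ^ 2 * z4 a b ^ 1)) / z1 a b ^ 2 := by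
    intro a b
    have hc : d1 (d3 z) a b = d3 z1 a b := by rw [hZ1]; exact clairaut hz' a b
    rw [← hc]; exact hw1x a b
  have hw2x : ∀ a b, d1 (d3 z1) a b = (((-3 : ℝ)/4) * (z2 a b ^ 4) + ((15 : ℝ)/8) * (z1 a b ^ 1 * z2 a b ^ 2 * z3 a b ^ 1) + ((-3 : ℝ)/4) * (z1 a b ^ 2 * z3 a b ^ 2) + ((-3 : ℝ)/4) * (z1 a b ^ 2 * z2 a b ^ 1 * z4 a b ^ 1) + ((1 : ℝ)/4) * (z1 a b ^ 3 * z5 a b ^ 1)) / z1 a b ^ 3 := by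
    intro a b
    have hfun : (fun s => (d3 z1) s b) = (fun s => (((3 : ℝ)/8) * (z2 s b ^ 3) + ((-3 : ℝ)/4) * (z1 s b ^ 1 * z2 s b ^ 1 * z3 s b ^ 1) + ((1 : ℝ)/4) * (z1 s b ^ 2 * z4 s b ^ 1)) / z1 s b ^ 2) := funext fun s => hw1 s b
    have H : HasDerivAt (fun s => (((3 : ℝ)/8) * (z2 s b ^ 3) + ((-3 : ℝ)/4) * (z1 s b ^ 1 * z2 s b ^ 1 * z3 s b ^ 1) + ((1 : ℝ)/4) * (z1 s b ^ 2 * z4 s b ^ 1)) / z1 s b ^ 2) ((((-3 : ℝ)/4) * (z2 a b ^ 4) + ((15 : ℝ)/8) * (z1 a b ^ 1 * z2 a b ^ 2 * z3 a b ^ 1) + ((-3 : ℝ)/4) * (z1 a b ^ 2 * z3 a b ^ 2) + ((-3 : ℝ)/4) * (z1 a b ^ 2 * z2 a b ^ 1 * z4 a b ^ 1) + ((1 : ℝ)/4) * (z1 a b ^ 3 * z5 a b ^ 1)) / z1 a b ^ 3) a := by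
      have H0 := (((((hD2 a b).pow 3).const_mul ((3 : ℝ)/8)).add (((((hD1 a b).pow 1).mul ((hD2 a b).pow 1)).mul ((hD3 a b).pow 1)).const_mul ((-3 : ℝ)/4))).add ((((hD1 a b).pow 2).mul ((hD4 a b).pow 1)).const_mul ((1 : ℝ)/4))).div ((hD1 a b).pow 2) (pow_ne_zero 2 (hnz a b))
      refine H0.congr_deriv (Eq.symm ?_)
      simp only [Pi.div_apply, Pi.pow_apply, Pi.mul_apply, Pi.add_apply, Pi.sub_apply, Nat.cast_ofNat]
      have h0 := hnz a b
      field_simp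
      all_goals try ring_nf
      all_goals try field_simp
      all_goals try ring
    show deriv (fun s => (d3 z1) s b) a = _
    rw [hfun]
    exact H.deriv
  have hw2 : ∀ a b, d3 z2 a b = (((-3 : ℝ)/4) * (z2 a b ^ 4) + ((15 : ℝ)/8) * (z1 a b ^ 1 * z2 a b ^ 2 * z3 a b ^ 1) + ((-3 : ℝ)/4) * (z1 a b ^ 2 * z3 a b ^ 2) + ((-3 : ℝ)/4) * (z1 a b ^ 2 * z2 a b ^ 1 * z4 a b ^ 1) + ((1 : ℝ)/4) * (z1 a b ^ 3 * z5 a b ^ 1)) / z1 a b ^ 3 := by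
    intro a b
    have hc : d1 (d3 z1) a b = d3 z2 a b := by rw [hZ2]; exact clairaut h1 a b
    rw [← hc]; exact hw2x a b
  have hw3x : ∀ a b, d1 (d3 z2) a b = (((9 : ℝ)/4) * (z2 a b ^ 5) + ((-27 : ℝ)/4) * (z1 a b ^ 1 * z2 a b ^ 3 * z3 a b ^ 1) + ((9 : ℝ)/2) * (z1 a b ^ 2 * z2 a b ^ 1 * z3 a b ^ 2) + ((21 : ℝ)/8) * (z1 a b ^ 2 * z2 a b ^ 2 * z4 a b ^ 1) + ((-9 : ℝ)/4) * (z1 a b ^ 3 * z3 a b ^ 1 * z4 a b ^ 1) + ((-3 : ℝ)/4) * (z1 a b ^ 3 * z2 a b ^ 1 * z5 a b ^ 1) + ((1 : ℝ)/4) * (z1 a b ^ 4 * z6 a b ^ 1)) / z1 a b ^ 4 := by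
    intro a b
    have hfun : (fun s => (d3 z2) s b) = (fun s => (((-3 : ℝ)/4) * (z2 s b ^ 4) + ((15 : ℝ)/8) * (z1 s b ^ 1 * z2 s b ^ 2 * z3 s b ^ 1) + ((-3 : ℝ)/4) * (z1 s b ^ 2 * z3 s b ^ 2) + ((-3 : ℝ)/4) * (z1 s b ^ 2 * z2 s b ^ 1 * z4 s b ^ 1) + ((1 : ℝ)/4) * (z1 s b ^ 3 * z5 s b ^ 1)) / z1 s b ^ 3) := funext fun s => hw2 s b
    have H : HasDerivAt (fun s => (((-3 : ℝ)/4) * (z2 s b ^ 4) + ((15 : ℝ)/8) * (z1 s b ^ 1 * z2 s b ^ 2 * z3 s b ^ 1) + ((-3 : ℝ)/4) * (z1 s b ^ 2 * z3 s b ^ 2) + ((-3 : ℝ)/4) * (z1 s b ^ 2 * z2 s b ^ 1 * z4 s b ^ 1) + ((1 : ℝ)/4) * (z1 s b ^ 3 * z5 s b ^ 1)) / z1 s b ^ 3) ((((9 : ℝ)/4) * (z2 a b ^ 5) + ((-27 : ℝ)/4) * (z1 a b ^ 1 * z2 a b ^ 3 * z3 a b ^ 1) + ((9 : ℝ)/2)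 * (z1 a b ^ 2 * z2 a b ^ 1 * z3 a b ^ 2) + ((21 : ℝ)/8) * (z1 a b ^ 2 * z2 a b ^ 2 * z4 a b ^ 1) + ((-9 : ℝ)/4) * (z1 a b ^ 3 * z3 a b ^ 1 * z4 a b ^ 1) + ((-3 : ℝ)/4) * (z1 a b ^ 3 * z2 a b ^ 1 * z5 a b ^ 1) + ((1 : ℝ)/4) * (z1 a b ^ 4 * z6 a b ^ 1)) / z1 a b ^ 4) a := by
      have H0 := (((((((hD2 a b).pow 4).const_mul ((-3 : ℝ)/4)).add (((((hD1 a b).pow 1).mul ((hD2 a b).pow 2)).mul ((hD3 a b).pow 1)).const_mul ((15 : ℝ)/8))).add ((((hD1 a b).pow 2).mul ((hD3 a b).pow 2)).const_mul ((-3 : ℝ)/4))).add (((((hD1 a b).pow 2).mul ((hD2 a b).pow 1)).mul ((hD4 a b).pow 1)).const_mul ((-3 : ℝ)/4))).add ((((hD1 a b).pow 3).mul ((hD5 a b).pow 1)).const_mul ((1 : ℝ)/4))).div ((hD1 a b).pow 3) (pow_ne_zero 3 (hnz a b))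
      refine H0.congr_deriv (Eq.symm ?_)
      simp only [Pi.div_apply, Pi.pow_apply, Pi.mul_apply, Pi.add_apply, Pi.sub_apply, Nat.cast_ofNat]
      have h0 := hnz a b
      field_simp
      all_goals try ring_nf
      all_goals try field_simp
      all_goals try ring
    show deriv (fun s => (d3 z2) s b) a = _
    rw [hfun]
    exact H.deriv
  have hw3 : ∀ a b, d3 z3 a b = (((9 : ℝ)/4) * (z2 a b ^ 5) + ((-27 : ℝ)/4) * (z1 a b ^ 1 * z2 a b ^ 3 * z3 a b ^ 1) + ((9 : ℝ)/2) * (z1 a b ^ 2 * z2 a b ^ 1 * z3 a b ^ 2) + ((21 : ℝ)/8) * (z1 a b ^ 2 * z2 a b ^ 2 * z4 a b ^ 1) + ((-9 : ℝ)/4) * (z1 a b ^ 3 * z3 a b ^ 1 * z4 a b ^ 1) + ((-3 : ℝ)/4) * (z1 a b ^ 3 * z2 a b ^ 1 * z5 a b ^ 1) + ((1 : ℝ)/4) * (z1 a b ^ 4 * z6 a b ^ 1)) / z1 a b ^ 4 := by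
    intro a b
    have hc : d1 (d3 z2) a b = d3 z3 a b := by rw [hZ3]; exact clairaut h2 a b
    rw [← hc]; exact hw3x a b
  intro x y
  have hT1 : HasDerivAt (fun t => z1 x t) (d3 z1 x y) y := hasDerivAt_d3 h1 x y
  have hT2 : HasDerivAt (fun t => z2 x t) (d3 z2 x y) y := hasDerivAt_d3 h2 x y
  have hT3 : HasDerivAt (fun t => z3 x t) (d3 z3 x y) y := hasDerivAt_d3 h3 x y
  have hfunT : (fun t => u x t) =
      (fun t => 1 / 2 * (z3 x t / z1 x t - 3 / 2 * (z2 x t / z1 x t) ^ 2)) := by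
    funext t; simp only [hud]; rw [hS x t]
  have HT : HasDerivAt
      (fun t => 1 / 2 * (z3 x t / z1 x t - 3 / 2 * (z2 x t / z1 x t) ^ 2))
      ((((45 : ℝ)/16) * (z1 x y ^ 1 * z2 x y ^ 5) + ((-15 : ℝ)/2) * (z1 x y ^ 2 * z2 x y ^ 3 * z3 x y ^ 1) + ((15 : ℝ)/4) * (z1 x y ^ 3 * z2 x y ^ 1 * z3 x y ^ 2) + ((45 : ℝ)/16) * (z1 x y ^ 3 * z2 x y ^ 2 * z4 x y ^ 1) + ((-5 : ℝ)/4) * (z1 x y ^ 4 * z3 x y ^ 1 * z4 x y ^ 1) + ((-3 : ℝ)/4) * (z1 x y ^ 4 * z2 x y ^ 1 * z5 x y ^ 1) + ((1 : ℝ)/8) * (z1 x y ^ 5 * z6 x y ^ 1)) / z1 x y ^ 6) y := by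
    have H0 := (((hT3.div hT1 (hnz x y)).sub
      (((hT2.div hT1 (hnz x y)).pow 2).const_mul (3 / 2))).const_mul (1 / 2))
    refine H0.congr_deriv (Eq.symm ?_)
    simp only [Pi.div_apply, Pi.pow_apply, Pi.mul_apply, Pi.add_apply, Pi.sub_apply, Nat.cast_ofNat]
    rw [hw1 x y, hw2 x y, hw3 x y]
    have h0 := hnz x y
    rw [div_eq_iff (pow_ne_zero 6 h0)]
    field_simp
    all_goals try ring_nf
    all_goals try field_simp
    all_goals try ring
  have hut : d3 u x y = (((45 : ℝ)/16) * (z1 x y ^ 1 * z2 x y ^ 5) + ((-15 : ℝ)/2) * (z1 x y ^ 2 * z2 x y ^ 3 * z3 x y ^ 1) + ((15 : ℝ)/4) * (z1 x y ^ 3 * z2 x y ^ 1 * z3 x y ^ 2) + ((45 : ℝ)/16) * (z1 x y ^ 3 * z2 x y ^ 2 * z4 x y ^ 1) + ((-5 : ℝ)/4) * (z1 x y ^ 4 * z3 x y ^ 1 * z4 x y ^ 1) + ((-3 : ℝ)/4) * (z1 x y ^ 4 * z2 x y ^ 1 * z5 x y ^ 1) + ((1 : ℝ)/8) * (z1 x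 y ^ 5 * z6 x y ^ 1)) / z1 x y ^ 6 := by
    show deriv (fun t => u x t) y = _
    rw [hfunT]
    exact HT.deriv
  rw [hut, hu3 x y, hu1 x y, hS x y]
  have h0 := hnz x y
  field_simp
  all_goals try ring_nf
  all_goals try field_simp
  all_goals try ring
end
end

section
/- Miura transformation: if v is a smooth function of (t₁,t₃) satisfying the modified KdV equation 4∂₃v = ∂₁³v − 6v²∂₁v, then u := ∂₁v − v² satisfies the KdV equation 4∂₃u = ∂₁³u + 6u∂₁u. -/
noncomputable section

namespace MAux

abbrev Sm (f : ℝ → ℝ → ℝ) : Prop := ContDiff ℝ (⊤ : ℕ∞) (fun p : ℝ × ℝ => f p.1 p.2)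

lemma hasDerivAt_p1 {f : ℝ → ℝ → ℝ} (hf : Sm f) (x y : ℝ) :
    HasDerivAt (fun s => f s y) (fderiv ℝ (fun p : ℝ × ℝ => f p.1 p.2) (x, y) (1, 0)) x := by
  have h1 : HasFDerivAt (fun s : ℝ => (s, y))
      ((ContinuousLinearMap.id ℝ ℝ).prod 0) x :=
    (hasFDerivAt_id x).prodMk (hasFDerivAt_const y x)
  have h2 := (hf.differentiable (by simp) (x, y)).hasFDerivAt
  have h3 := (h2.comp x h1).hasDerivAt
  simpa [Function.comp_def] using h3

lemma hasDerivAt_p3 {f : ℝ → ℝ → ℝ} (hf : Sm f) (x y : ℝ) :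
    HasDerivAt (fun t => f x t) (fderiv ℝ (fun p : ℝ × ℝ => f p.1 p.2) (x, y) (0, 1)) y := by
  have h1 : HasFDerivAt (fun t : ℝ => (x, t))
      ((0 : ℝ →L[ℝ] ℝ).prod (ContinuousLinearMap.id ℝ ℝ)) y :=
    (hasFDerivAt_const x y).prodMk (hasFDerivAt_id y)
  have h2 := (hf.differentiable (by simp) (x, y)).hasFDerivAt
  have h3 := (h2.comp y h1).hasDerivAt
  simpa [Function.comp_def] using h3

lemma d1_eq {f : ℝ → ℝ → ℝ} (hf : Sm f) (x y : ℝ) :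
    d1 f x y = fderiv ℝ (fun p : ℝ × ℝ => f p.1 p.2) (x, y) (1, 0) :=
  (hasDerivAt_p1 hf x y).deriv

lemma d3_eq {f : ℝ → ℝ → ℝ} (hf : Sm f) (x y : ℝ) :
    d3 f x y = fderiv ℝ (fun p : ℝ × ℝ => f p.1 p.2) (x, y) (0, 1) :=
  (hasDerivAt_p3 hf x y).deriv

lemma smooth_d1 {f : ℝ → ℝ → ℝ} (hf : Sm f) : Sm (d1 f) := by
  have h : (fun p : ℝ × ℝ => d1 f p.1 p.2)
      = fun p : ℝ × ℝ => fderiv ℝ (fun q : ℝ × ℝ => f q.1 q.2) p (1, 0) := by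
    funext p
    exact d1_eq hf p.1 p.2
  show ContDiff ℝ (⊤ : ℕ∞) fun p : ℝ × ℝ => d1 f p.1 p.2
  rw [h]
  exact (hf.fderiv_right (by simp)).clm_apply contDiff_const

lemma smooth_d3 {f : ℝ → ℝ → ℝ} (hf : Sm f) : Sm (d3 f) := by
  have h : (fun p : ℝ × ℝ => d3 f p.1 p.2)
      = fun p : ℝ × ℝ => fderiv ℝ (fun q : ℝ × ℝ => f q.1 q.2) p (0, 1) := by
    funext p
    exact d3_eq hf p.1 p.2
  show ContDiff ℝ (⊤ : ℕ∞) fun p : ℝ × ℝ => d3 f p.1 p.2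
  rw [h]
  exact (hf.fderiv_right (by simp)).clm_apply contDiff_const


lemma diffAt_p1 {f : ℝ → ℝ → ℝ} (hf : Sm f) (x y : ℝ) :
    DifferentiableAt ℝ (fun s => f s y) x :=
  (hasDerivAt_p1 hf x y).differentiableAt

lemma diffAt_p3 {f : ℝ → ℝ → ℝ} (hf : Sm f) (x y : ℝ) :
    DifferentiableAt ℝ (fun t => f x t) y :=
  (hasDerivAt_p3 hf x y).differentiableAt

lemma d1_sub {f g : ℝ → ℝ → ℝ} (hf : Sm f) (hg : Sm g) (x y : ℝ) :
    d1 (fun s t => f s t - g s t) x y = d1 f x y - d1 g x y := by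
  simpa [d1] using deriv_fun_sub (diffAt_p1 hf x y) (diffAt_p1 hg x y)

lemma d3_sub {f g : ℝ → ℝ → ℝ} (hf : Sm f) (hg : Sm g) (x y : ℝ) :
    d3 (fun s t => f s t - g s t) x y = d3 f x y - d3 g x y := by
  simpa [d3] using deriv_fun_sub (diffAt_p3 hf x y) (diffAt_p3 hg x y)

lemma d1_mul {f g : ℝ → ℝ → ℝ} (hf : Sm f) (hg : Sm g) (x y : ℝ) :
    d1 (fun s t => f s t * g s t) x y = d1 f x y * g x y + f x y * d1 g x y := by
  simpa [d1] using deriv_fun_mul (diffAt_p1 hf x y) (diffAt_p1 hg x y)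

lemma d3_mul {f g : ℝ → ℝ → ℝ} (hf : Sm f) (hg : Sm g) (x y : ℝ) :
    d3 (fun s t => f s t * g s t) x y = d3 f x y * g x y + f x y * d3 g x y := by
  simpa [d3] using deriv_fun_mul (diffAt_p3 hf x y) (diffAt_p3 hg x y)

lemma d1_const_mul {f : ℝ → ℝ → ℝ} (hf : Sm f) (c x y : ℝ) :
    d1 (fun s t => c * f s t) x y = c * d1 f x y := by
  simpa [d1] using deriv_const_mul c (diffAt_p1 hf x y)

lemma d1_sq {f : ℝ → ℝ → ℝ} (hf : Sm f) (x y : ℝ) :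
    d1 (fun s t => (f s t) ^ 2) x y = 2 * f x y * d1 f x y := by
  have h := hasDerivAt_p1 hf x y
  have h2 := (h.fun_pow 2).deriv
  show deriv (fun s => (f s y) ^ 2) x = _
  rw [h2, d1_eq hf x y]
  push_cast
  ring

lemma d3_sq {f : ℝ → ℝ → ℝ} (hf : Sm f) (x y : ℝ) :
    d3 (fun s t => (f s t) ^ 2) x y = 2 * f x y * d3 f x y := by
  have h := hasDerivAt_p3 hf x y
  have h2 := (h.fun_pow 2).deriv
  show deriv (fun t => (f x t) ^ 2) y = _
  rw [h2, d3_eq hf x y]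
  push_cast
  ring

lemma Sm.sq {f : ℝ → ℝ → ℝ} (hf : Sm f) : Sm (fun s t => (f s t) ^ 2) := hf.pow 2

lemma d1_d3_comm {f : ℝ → ℝ → ℝ} (hf : Sm f) (x y : ℝ) :
    d1 (d3 f) x y = d3 (d1 f) x y := by
  set F : ℝ × ℝ → ℝ := fun p => f p.1 p.2 with hF
  have hsym : fderiv ℝ (fderiv ℝ F) (x, y) (1, 0) (0, 1)
      = fderiv ℝ (fderiv ℝ F) (x, y) (0, 1) (1, 0) := by
    refine second_derivative_symmetric
      (fun z => ((hf.differentiable (by simp)) z).hasFDerivAt)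
      (((hf.fderiv_right (m := (⊤ : ℕ∞)) (by simp)).differentiable (by simp) (x, y)).hasFDerivAt) _ _
  have key : ∀ w z : ℝ × ℝ,
      fderiv ℝ (fun p : ℝ × ℝ => fderiv ℝ F p w) (x, y) z
        = fderiv ℝ (fderiv ℝ F) (x, y) z w := by
    intro w z
    have hc : DifferentiableAt ℝ (fderiv ℝ F) (x, y) :=
      (hf.fderiv_right (m := (⊤ : ℕ∞)) (by simp)).differentiable (by simp) (x, y)
    rw [fderiv_clm_apply hc (differentiableAt_const w)]
    simp
  have e1 : (fun p : ℝ × ℝ => d3 f p.1 p.2) = fun p => fderiv ℝ F p (0, 1) := by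
    funext p; exact d3_eq hf p.1 p.2
  have e2 : (fun p : ℝ × ℝ => d1 f p.1 p.2) = fun p => fderiv ℝ F p (1, 0) := by
    funext p; exact d1_eq hf p.1 p.2
  have l1 : d1 (d3 f) x y = fderiv ℝ (fun p : ℝ × ℝ => fderiv ℝ F p (0, 1)) (x, y) (1, 0) := by
    rw [d1_eq (smooth_d3 hf) x y, e1]
  have l2 : d3 (d1 f) x y = fderiv ℝ (fun p : ℝ × ℝ => fderiv ℝ F p (1, 0)) (x, y) (0, 1) := by
    rw [d3_eq (smooth_d1 hf) x y, e2]
  rw [l1, l2, key, key, hsym]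

lemma d1_add {f g : ℝ → ℝ → ℝ} (hf : Sm f) (hg : Sm g) (x y : ℝ) :
    d1 (fun s t => f s t + g s t) x y = d1 f x y + d1 g x y := by
  simpa [d1] using deriv_fun_add (diffAt_p1 hf x y) (diffAt_p1 hg x y)

end MAux

open MAux in
/-- Miura transformation: if `v` solves mKdV `4∂₃v = ∂₁³v − 6v²∂₁v`, then
`u := ∂₁v − v²` solves KdV `4∂₃u = ∂₁³u + 6u∂₁u`. -/
theorem miura (v : ℝ → ℝ → ℝ)
    (hv : ContDiff ℝ (⊤ : ℕ∞) (fun p : ℝ × ℝ => v p.1 p.2))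
    (hmkdv : ∀ x y, 4 * d3 v x y =
      d1 (d1 (d1 v)) x y - 6 * (v x y) ^ 2 * d1 v x y) :
    ∀ x y, 4 * d3 (fun s t => d1 v s t - (v s t) ^ 2) x y =
      d1 (d1 (d1 (fun s t => d1 v s t - (v s t) ^ 2))) x y +
        6 * (d1 v x y - (v x y) ^ 2) *
          d1 (fun s t => d1 v s t - (v s t) ^ 2) x y := by
  intro x y
  have hv1 : Sm (d1 v) := smooth_d1 hv
  have hv2 : Sm (d1 (d1 v)) := smooth_d1 hv1
  have hv3 : Sm (d1 (d1 (d1 v))) := smooth_d1 hv2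
  have hvsq : Sm (fun s t => (v s t) ^ 2) := Sm.sq hv
  have hA : Sm (fun s t => 2 * v s t) := by exact contDiff_const.mul hv
  have hP : Sm (fun s t => 2 * v s t * d1 v s t) := by exact hA.mul hv1
  have hB : Sm (fun s t => 6 * (v s t) ^ 2) := by exact contDiff_const.mul hvsq
  have hQ : Sm (fun s t => 6 * (v s t) ^ 2 * d1 v s t) := by exact hB.mul hv1
  -- first derivative of u
  have E1 : d1 (fun s t => d1 v s t - (v s t) ^ 2)
      = fun a b => d1 (d1 v) a b - 2 * v a b * d1 v a b := by
    funext a b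
    rw [d1_sub hv1 hvsq, d1_sq hv]
  have hw1 : Sm (fun a b => d1 (d1 v) a b - 2 * v a b * d1 v a b) := by
    exact hv2.sub hP
  -- second derivative of u
  have E2 : d1 (fun a b => d1 (d1 v) a b - 2 * v a b * d1 v a b)
      = fun a b => d1 (d1 (d1 v)) a b
          - (2 * d1 v a b * d1 v a b + 2 * v a b * d1 (d1 v) a b) := by
    funext a b
    rw [d1_sub hv2 hP, d1_mul hA hv1, d1_const_mul hv 2]
  have hA1 : Sm (fun s t => 2 * d1 v s t) := by exact contDiff_const.mul hv1
  have hw2 : Sm (fun a b => d1 (d1 (d1 v)) a b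
      - (2 * d1 v a b * d1 v a b + 2 * v a b * d1 (d1 v) a b)) := by
    exact hv3.sub ((hA1.mul hv1).add (hA.mul hv2))
  -- third derivative of u
  have E3 : d1 (fun a b => d1 (d1 (d1 v)) a b
      - (2 * d1 v a b * d1 v a b + 2 * v a b * d1 (d1 v) a b)) x y
      = d1 (d1 (d1 (d1 v))) x y
        - 6 * d1 v x y * d1 (d1 v) x y - 2 * v x y * d1 (d1 (d1 v)) x y := by
    rw [d1_sub hv3 (by exact (hA1.mul hv1).add (hA.mul hv2)),
      d1_add (by exact hA1.mul hv1) (by exact hA.mul hv2),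
      d1_mul hA1 hv1, d1_mul hA hv2, d1_const_mul hv1 2, d1_const_mul hv 2]
    ring
  -- time derivative of u
  have E4 : d3 (fun s t => d1 v s t - (v s t) ^ 2) x y
      = d1 (d3 v) x y - 2 * v x y * d3 v x y := by
    rw [d3_sub hv1 hvsq, d3_sq hv, ← d1_d3_comm hv x y]
  -- differentiate the mKdV equation in x
  have G : (fun a b => 4 * d3 v a b)
      = fun a b => d1 (d1 (d1 v)) a b - 6 * (v a b) ^ 2 * d1 v a b := by
    funext a b
    exact hmkdv a b
  have H2 : 4 * d1 (d3 v) x y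
      = d1 (d1 (d1 (d1 v))) x y - 12 * v x y * (d1 v x y) ^ 2
        - 6 * (v x y) ^ 2 * d1 (d1 v) x y := by
    have h := congrArg (fun f => d1 f x y) G
    rw [d1_const_mul (smooth_d3 hv) 4, d1_sub hv3 hQ, d1_mul hB hv1,
      d1_const_mul hvsq 6, d1_sq hv] at h
    rw [h]
    ring
  rw [E4, E1, E2, E3]
  beta_reduce
  linear_combination H2 - 2 * v x y * hmkdv x y
end
end
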